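/- arXiv:2206.11842 — 2 statements merged into one kernel-verified Lean document; each statement's English description precedes it below -/
import Mathlib

section
/- Let a_A, a_B ≥ 1 and 0 ≤ l_A, l_B ≤ 1 with l_A < 1 and l_B < 1. Define κ_A = a_A(1-l_A), κ_B = a_B(1-l_B). Then the Filippov–Ziman entanglement-annihilation condition κ_A·μ_B + κ_B·μ_A ≥ (κ_A + κ_B)/2, with μ_A = κ_A/2 + l_A - 1/2 and μ_B = κ_B/2 + l_B - 1/2, holds if and only if a_A·a_B ≥ a_A + a_B. -/
/-! With `κ = a (1 - l)` and `μ = κ / 2 + l - 1 / 2`, the Filippov–Ziman margin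
`κ_A μ_B + κ_B μ_A - (κ_A + κ_B) / 2` factors as `(1 - l_A)(1 - l_B)(a_A a_B - a_A - a_B)`,
so for losses below `1` its sign is that of `a_A a_B - a_A - a_B`. -/

theorem ampLoss_filippovZiman_margin_eq (aA aB lA lB : ℝ) :
    (aA * (1 - lA)) * ((aB * (1 - lB)) / 2 + lB - 1 / 2) +
        (aB * (1 - lB)) * ((aA * (1 - lA)) / 2 + lA - 1 / 2) -
        ((aA * (1 - lA)) + (aB * (1 - lB))) / 2 =
      (1 - lA) * (1 - lB) * (aA * aB - (aA + aB)) := by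
  ring

theorem filippov_ziman_amp_loss_general (aA aB lA lB : ℝ)
    (hA1 : lA < 1) (hB1 : lB < 1) :
    (aA * (1 - lA)) * ((aB * (1 - lB)) / 2 + lB - 1 / 2) +
        (aB * (1 - lB)) * ((aA * (1 - lA)) / 2 + lA - 1 / 2) ≥
        ((aA * (1 - lA)) + (aB * (1 - lB))) / 2 ↔
      aA * aB ≥ aA + aB := by
  have hpos : 0 < (1 - lA) * (1 - lB) := mul_pos (sub_pos.2 hA1) (sub_pos.2 hB1)
  rw [ge_iff_le, ← sub_nonneg, ampLoss_filippovZiman_margin_eq,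
    mul_nonneg_iff_of_pos_left hpos, sub_nonneg, ge_iff_le]

/-- Filippov–Ziman entanglement-annihilation condition for amplification-then-loss
channels is equivalent to `a_A a_B ≥ a_A + a_B`. -/
theorem filippov_ziman_amp_loss (aA aB lA lB : ℝ)
    (haA : 1 ≤ aA) (haB : 1 ≤ aB)
    (hA0 : 0 ≤ lA) (hA1 : lA < 1) (hB0 : 0 ≤ lB) (hB1 : lB < 1) :
    (aA * (1 - lA)) * ((aB * (1 - lB)) / 2 + lB - 1 / 2) +
        (aB * (1 - lB)) * ((aA * (1 - lA)) / 2 + lA - 1 / 2) ≥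
        ((aA * (1 - lA)) + (aB * (1 - lB))) / 2 ↔
      aA * aB ≥ aA + aB :=
  filippov_ziman_amp_loss_general aA aB lA lB hA1 hB1
end

section
/- Let κ_A = a_A(1-l_A), κ_B = a_B(1-l_B), η = 1 - l_A - l_B with a_A, a_B ≥ 1, 0 ≤ l_A, l_B ≤ 1, l_A + l_B < 1, and let r > 0. Define n_A, n_B, c by n_A = (2κ_A + κ_B + 2(κ_A + κ_B - 2η)cosh(2r) + κ_B cosh(4r)) / (4(κ_A + κ_B - 2η + (κ_A + κ_B)cosh(2r))), n_B symmetrically with A and B exchanged, and c = 2√(κ_A κ_B)(cosh r · sinh r)² / (κ_A + κ_B - 2η + (κ_A + κ_B)cosh(2r)). Then with a² := √((2n_B - 1)/(2n_A - 1)), the Duan quantity 2a²n_A + 2n_B/a² - 4c - a² - 1/a² tends to -2(1 - l_A - l_B)/√(κ_A κ_B) as r → ∞, which is strictly negative. -/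
open Real Filter

private lemma duan_eq (κA κB η C nA nB c s : ℝ)
    (hκApos : 0 < κA) (hκBpos : 0 < κB) (hη0 : 0 < η)
    (hηA : η ≤ κA) (hηB : η ≤ κB) (hC : 1 < C)
    (hnA : 2 * nA - 1 = (C - 1) * (κB * (C + 1) - 2 * η) /
        (κA + κB - 2 * η + (κA + κB) * C))
    (hnB : 2 * nB - 1 = (C - 1) * (κA * (C + 1) - 2 * η) /
        (κA + κB - 2 * η + (κA + κB) * C))
    (hc : 4 * c = 2 * Real.sqrt (κA * κB) * (C ^ 2 - 1) /
        (κA + κB - 2 * η + (κA + κB) * C))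
    (hs : s = Real.sqrt ((2 * nB - 1) / (2 * nA - 1))) :
    2 * s * nA + 2 * nB / s - 4 * c - s - 1 / s =
      2 * (1 - C⁻¹) * (4 * η ^ 2 * C⁻¹ - 2 * η * (1 + C⁻¹) * (κA + κB)) /
        (((κA + κB - 2 * η) * C⁻¹ + (κA + κB)) *
          (Real.sqrt ((κA * (1 + C⁻¹) - 2 * η * C⁻¹) * (κB * (1 + C⁻¹) - 2 * η * C⁻¹)) +
            Real.sqrt (κA * κB) * (1 + C⁻¹))) := by
  have hC0 : (0:ℝ) < C := by linarith
  have hCne : C ≠ 0 := hC0.ne'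
  have hDpos : 0 < κA + κB - 2 * η + (κA + κB) * C := by nlinarith
  have hDne : κA + κB - 2 * η + (κA + κB) * C ≠ 0 := hDpos.ne'
  have hP : 0 < κA * (C + 1) - 2 * η := by nlinarith
  have hQ : 0 < κB * (C + 1) - 2 * η := by nlinarith
  set p := Real.sqrt (κA * (C + 1) - 2 * η) with hpdef
  set q := Real.sqrt (κB * (C + 1) - 2 * η) with hqdef
  set k := Real.sqrt (κA * κB) with hkdef
  have hp0 : 0 < p := Real.sqrt_pos.mpr hP
  have hq0 : 0 < q := Real.sqrt_pos.mpr hQ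
  have hk0 : 0 < k := Real.sqrt_pos.mpr (by positivity)
  have hp2 : p ^ 2 = κA * (C + 1) - 2 * η := Real.sq_sqrt hP.le
  have hq2 : q ^ 2 = κB * (C + 1) - 2 * η := Real.sq_sqrt hQ.le
  have hk2 : k ^ 2 = κA * κB := Real.sq_sqrt (by positivity)
  have hC1 : C - 1 ≠ 0 := by linarith
  have harg : (2 * nB - 1) / (2 * nA - 1)
      = (κA * (C + 1) - 2 * η) / (κB * (C + 1) - 2 * η) := by
    rw [hnA, hnB, div_div_div_cancel_right₀ hDne, mul_div_mul_left _ _ hC1]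
  have hsval : s = p / q := by
    rw [hs, harg, Real.sqrt_div hP.le, ← hpdef, ← hqdef]
  have hsne : s ≠ 0 := by rw [hsval]; positivity
  have e1 : s * (2 * nA - 1) = (C - 1) * (p * q) / (κA + κB - 2 * η + (κA + κB) * C) := by
    rw [hsval, hnA, ← hq2]
    field_simp
  have e2 : (2 * nB - 1) / s = (C - 1) * (p * q) / (κA + κB - 2 * η + (κA + κB) * C) := by
    rw [hsval, hnB, ← hp2]
    field_simp
  have lhs_eq : 2 * s * nA + 2 * nB / s - 4 * c - s - 1 / s
      = 2 * (C - 1) * (p * q - k * (C + 1)) / (κA + κB - 2 * η + (κA + κB) * C) := by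
    have h1 : 2 * s * nA + 2 * nB / s - 4 * c - s - 1 / s
        = s * (2 * nA - 1) + (2 * nB - 1) / s - 4 * c := by
      field_simp
      ring
    rw [h1, e1, e2, hc]
    field_simp
    ring
  have hsqR : Real.sqrt ((κA * (1 + C⁻¹) - 2 * η * C⁻¹) * (κB * (1 + C⁻¹) - 2 * η * C⁻¹))
      = p * q / C := by
    have h2 : (κA * (1 + C⁻¹) - 2 * η * C⁻¹) * (κB * (1 + C⁻¹) - 2 * η * C⁻¹)
        = ((κA * (C + 1) - 2 * η) * (κB * (C + 1) - 2 * η)) / C ^ 2 := by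
      field_simp
    rw [h2, Real.sqrt_div (by positivity), Real.sqrt_mul hP.le, ← hpdef, ← hqdef,
      Real.sqrt_sq hC0.le]
  rw [lhs_eq, hsqR]
  have hden1 : ((κA + κB - 2 * η) * C⁻¹ + (κA + κB)) > 0 := by
    have h1 : 0 ≤ (κA + κB - 2 * η) * C⁻¹ :=
      mul_nonneg (by linarith) (inv_pos.mpr hC0).le
    linarith
  have hden2 : 0 < p * q / C + k * (1 + C⁻¹) := by positivity
  have hsum : 0 < p * q + k * (C + 1) := by positivity
  have hkey : (p * q) ^ 2 = k ^ 2 * (C + 1) ^ 2 + 4 * η ^ 2 - 2 * η * (C + 1) * (κA + κB) := by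
    rw [mul_pow, hp2, hq2, hk2]
    ring
  have hRHS : 2 * (1 - C⁻¹) * (4 * η ^ 2 * C⁻¹ - 2 * η * (1 + C⁻¹) * (κA + κB)) /
        (((κA + κB - 2 * η) * C⁻¹ + (κA + κB)) * (p * q / C + k * (1 + C⁻¹)))
      = 2 * (C - 1) * (4 * η ^ 2 - 2 * η * (C + 1) * (κA + κB)) /
        ((κA + κB - 2 * η + (κA + κB) * C) * (p * q + k * (C + 1))) := by
    rw [div_eq_div_iff (by positivity) (by positivity)]
    field_simp
  rw [hRHS, div_eq_div_iff hDne (by positivity)]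
  linear_combination (2 * (C - 1) * (κA + κB - 2 * η + (κA + κB) * C)) * hkey

/-- The Duan quantity for the post-swap state tends to `-2(1-l_A-l_B)/√(κ_A κ_B)`
as the squeezing `r → ∞`, and this limit is strictly negative. -/
theorem duan_quantity_tendsto (aA aB lA lB κA κB η : ℝ)
    (haA : 1 ≤ aA) (haB : 1 ≤ aB)
    (hA0 : 0 ≤ lA) (hA1 : lA ≤ 1) (hB0 : 0 ≤ lB) (hB1 : lB ≤ 1)
    (hlt : lA + lB < 1)
    (hκA : κA = aA * (1 - lA)) (hκB : κB = aB * (1 - lB))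
    (hη : η = 1 - lA - lB)
    (hκApos : 0 < κA) (hκBpos : 0 < κB) :
    Filter.Tendsto (fun r : ℝ =>
        let D := κA + κB - 2 * η + (κA + κB) * Real.cosh (2 * r)
        let nA := (2 * κA + κB + 2 * (κA + κB - 2 * η) * Real.cosh (2 * r)
            + κB * Real.cosh (4 * r)) / (4 * D)
        let nB := (2 * κB + κA + 2 * (κA + κB - 2 * η) * Real.cosh (2 * r)
            + κA * Real.cosh (4 * r)) / (4 * D)
        let c := 2 * Real.sqrt (κA * κB) * (Real.cosh r * Real.sinh r) ^ 2 / D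
        let s := Real.sqrt ((2 * nB - 1) / (2 * nA - 1))
        2 * s * nA + 2 * nB / s - 4 * c - s - 1 / s)
      Filter.atTop (nhds (-2 * (1 - lA - lB) / Real.sqrt (κA * κB))) ∧
    -2 * (1 - lA - lB) / Real.sqrt (κA * κB) < 0 := by
  have hη0 : 0 < η := by rw [hη]; linarith
  have hηA : η ≤ κA := by
    rw [hη, hκA]
    nlinarith [mul_nonneg (by linarith : (0:ℝ) ≤ aA - 1) (by linarith : (0:ℝ) ≤ 1 - lA)]
  have hηB : η ≤ κB := by
    rw [hη, hκB]
    nlinarith [mul_nonneg (by linarith : (0:ℝ) ≤ aB - 1) (by linarith : (0:ℝ) ≤ 1 - lB)]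
  have hk : (0:ℝ) < κA * κB := mul_pos hκApos hκBpos
  have hks : 0 < Real.sqrt (κA * κB) := Real.sqrt_pos.mpr hk
  have hneg : -2 * (1 - lA - lB) / Real.sqrt (κA * κB) < 0 :=
    div_neg_of_neg_of_pos (by linarith) hks
  refine ⟨?_, hneg⟩
  set G : ℝ → ℝ := fun x =>
    2 * (1 - x) * (4 * η ^ 2 * x - 2 * η * (1 + x) * (κA + κB)) /
      (((κA + κB - 2 * η) * x + (κA + κB)) *
        (Real.sqrt ((κA * (1 + x) - 2 * η * x) * (κB * (1 + x) - 2 * η * x)) +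
          Real.sqrt (κA * κB) * (1 + x))) with hGdef
  have hG0 : G 0 = -2 * (1 - lA - lB) / Real.sqrt (κA * κB) := by
    rw [← hη]
    simp only [hGdef]
    norm_num
    rw [div_eq_div_iff (by positivity) hks.ne']
    ring
  have hcont : ContinuousAt G 0 := by
    rw [hGdef]
    apply ContinuousAt.div
    · fun_prop
    · apply ContinuousAt.mul
      · fun_prop
      · apply ContinuousAt.add
        · exact (Real.continuous_sqrt.comp (by fun_prop)).continuousAt
        · fun_prop
    · norm_num
      constructor
      · intro h; linarith
      · intro h
        have : (0:ℝ) < Real.sqrt (κA * κB) + Real.sqrt (κA * κB) := by linarith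
        linarith [h ▸ this]
  have hcoshTop : Tendsto (fun r : ℝ => Real.cosh (2 * r)) atTop atTop := by
    have h1 : Tendsto (fun r : ℝ => Real.exp (2 * r) / 2) atTop atTop :=
      (Real.tendsto_exp_atTop.comp (tendsto_id.const_mul_atTop two_pos)).atTop_div_const two_pos
    refine tendsto_atTop_mono (fun r => ?_) h1
    rw [Real.cosh_eq]
    have := (Real.exp_pos (-(2 * r))).le
    linarith
  have hxto : Tendsto (fun r : ℝ => (Real.cosh (2 * r))⁻¹) atTop (nhds 0) :=
    hcoshTop.inv_tendsto_atTop
  have hcomp : Tendsto (fun r : ℝ => G ((Real.cosh (2 * r))⁻¹)) atTop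
      (nhds (-2 * (1 - lA - lB) / Real.sqrt (κA * κB))) := by
    rw [← hG0]
    exact hcont.tendsto.comp hxto
  refine Filter.Tendsto.congr' ?_ hcomp
  filter_upwards [eventually_ge_atTop (1:ℝ)] with r hr
  have hC : 1 < Real.cosh (2 * r) :=
    Real.one_lt_cosh.mpr (by positivity)
  have h4 : Real.cosh (4 * r) = 2 * (Real.cosh (2 * r)) ^ 2 - 1 := by
    rw [show (4:ℝ) * r = 2 * (2 * r) by ring, Real.cosh_two_mul, Real.sinh_sq]
    ring
  have hW : (Real.cosh r * Real.sinh r) ^ 2 = ((Real.cosh (2 * r)) ^ 2 - 1) / 4 := by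
    rw [← Real.sinh_sq, Real.sinh_two_mul]
    ring
  set C := Real.cosh (2 * r) with hCdef
  have hDpos : 0 < κA + κB - 2 * η + (κA + κB) * C := by nlinarith
  simp only [hGdef]
  rw [h4, hW]
  refine (duan_eq κA κB η C _ _ _ _ hκApos hκBpos hη0 hηA hηB hC ?_ ?_ ?_ rfl).symm
  · field_simp
    ring
  · field_simp
    ring
  · field_simp
end
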